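/- Optimal exercise of an American put via the universal process K: fix k ≥ 0. An extended stopping time is a map τ : Ω → {0,...,N} ∪ {∞} with {τ = t} ∈ F_t for all t ∈ {0,...,N}; its payoff is ξ_τ := (1+r)^{-τ}(k - P_τ)·1_{{τ ≤ N}} (equal to 0 on {τ = ∞}), an F_N-measurable square-integrable random variable. Define the extended stopping times τ̲ᵏ := min{ t ∈ {0,...,N} : K_t ≤ k } and τ̄ᵏ := min{ t ∈ {0,...,N} : K_t < k }, each equal to ∞ if no such t exists. If an extended stopping time τᵏ satisfies τ̲ᵏ ≤ τᵏ ≤ τ̄ᵏ a.s. and, a.s. on the event {τᵏ ≤ N}, min_{0≤v≤τᵏ} K_v = K_{τᵏ}, then τᵏ is optimal: for every extended stopping time τ, E_0[ξ_τ] ≤ E_0[ξ_{τᵏ}] a.s. -/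

import Mathlib

/-! Write `ξₜ = (1+r)⁻ᵗ (k - Pₜ)` for the discounted payoff of exercise at `t`. The
representation of `P` through `K` and translation invariance give `ξₜ = Eₜ[Wₜ]` with
`Wₜ = ∑ᵤ wᵤ (k - min_{t ≤ v ≤ u} Kᵥ)` (`u` from `t` to `N`), the weights `wᵤ` summing to
`(1+r)⁻ᵗ`. Every `Wₜ` is dominated by `V = ∑ᵤ wᵤ (k - min_{v ≤ u} Kᵥ)⁺` (`u` from `0` to `N`);
on `{τᵏ = t}` the conditions on `τᵏ` force `Wₜ = V`, and on `{τᵏ > N}` they force `V = 0`.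
Pasting claims along a stopping time with the zero-one law and the tower property turns
these comparisons on the events `{τ = t}` into `E₀[ξ_τ] ≤ E₀[V] ≤ E₀[ξ_{τᵏ}]`. -/

open MeasureTheory Filter

/-- Running maximum `max_{t ≤ v ≤ u} L v ω` (intended for `t ≤ u`). -/
noncomputable def runMax {Ω : Type*} (L : ℕ → Ω → ℝ) (t u : ℕ) (ω : Ω) : ℝ :=
  (Finset.Icc t u).fold max (L t ω) fun v => L v ω

/-- Running minimum `min_{t ≤ v ≤ u} K v ω` (intended for `t ≤ u`). -/
noncomputable def runMin {Ω : Type*} (K : ℕ → Ω → ℝ) (t u : ℕ) (ω : Ω) : ℝ :=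
  (Finset.Icc t u).fold min (K t ω) fun v => K v ω

/-- A discrete-time nonlinear expectation on the horizon `{0, ..., N}`:
a family of maps `E t` sending square-integrable `F N`-measurable random
variables to square-integrable `F t`-measurable random variables, satisfying
monotonicity, strict monotonicity, translation invariance, the tower property,
the zero-one law and monotone convergence. -/
structure NLExp {Ω : Type*} {m0 : MeasurableSpace Ω} (μ : Measure Ω)
    (F : Filtration ℕ m0) (N : ℕ) where
  E : ℕ → (Ω → ℝ) → Ω → ℝ
  adapted : ∀ t, t ≤ N → ∀ ξ : Ω → ℝ, StronglyMeasurable[F N] ξ → MemLp ξ 2 μ →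
    StronglyMeasurable[F t] (E t ξ)
  sqInt : ∀ t, t ≤ N → ∀ ξ : Ω → ℝ, StronglyMeasurable[F N] ξ → MemLp ξ 2 μ →
    MemLp (E t ξ) 2 μ
  mono : ∀ t, t ≤ N → ∀ ξ η : Ω → ℝ, StronglyMeasurable[F N] ξ → MemLp ξ 2 μ →
    StronglyMeasurable[F N] η → MemLp η 2 μ → ξ ≤ᵐ[μ] η → E t ξ ≤ᵐ[μ] E t η
  strictMono : ∀ t, t ≤ N → ∀ ξ η : Ω → ℝ, StronglyMeasurable[F N] ξ → MemLp ξ 2 μ →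
    StronglyMeasurable[F N] η → MemLp η 2 μ → ξ ≤ᵐ[μ] η →
    0 < μ {ω | ξ ω < η ω} → 0 < μ {ω | E t ξ ω < E t η ω}
  translation : ∀ t, t ≤ N → ∀ ξ ζ : Ω → ℝ, StronglyMeasurable[F N] ξ → MemLp ξ 2 μ →
    StronglyMeasurable[F t] ζ → MemLp ζ 2 μ → E t (ξ + ζ) =ᵐ[μ] E t ξ + ζ
  tower : ∀ s t, s ≤ t → t ≤ N → ∀ ξ : Ω → ℝ, StronglyMeasurable[F N] ξ → MemLp ξ 2 μ →
    E s (E t ξ) =ᵐ[μ] E s ξ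
  zeroOne : ∀ t, t ≤ N → ∀ ξ η : Ω → ℝ, StronglyMeasurable[F N] ξ → MemLp ξ 2 μ →
    StronglyMeasurable[F N] η → MemLp η 2 μ → ∀ A : Set Ω, MeasurableSet[F t] A →
    E t (A.indicator ξ + Aᶜ.indicator η) =ᵐ[μ]
      A.indicator (E t ξ) + Aᶜ.indicator (E t η)
  monoConv : ∀ t, t ≤ N → ∀ (ξs : ℕ → Ω → ℝ) (ξ : Ω → ℝ),
    (∀ n, StronglyMeasurable[F N] (ξs n)) → (∀ n, MemLp (ξs n) 2 μ) →
    StronglyMeasurable[F N] ξ → MemLp ξ 2 μ →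
    (∀ᵐ ω ∂μ, (Monotone fun n => ξs n ω) ∨ (Antitone fun n => ξs n ω)) →
    (∀ᵐ ω ∂μ, Tendsto (fun n => ξs n ω) atTop (nhds (ξ ω))) →
    ∀ᵐ ω ∂μ, Tendsto (fun n => E t (ξs n) ω) atTop (nhds (E t ξ ω))

/-- The payoff of an American put with strike `k` exercised at the extended stopping
time `τ` (valued in `{0,...,N} ∪ {∞}`): `(1+r)^{-τ} (k - P_τ) · 1_{{τ ≤ N}}`. -/
noncomputable def putPayoff {Ω : Type*} (r k : ℝ) (S : ℕ → Ω → ℝ) (N : ℕ)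
    (τ : Ω → ℕ∞) (ω : Ω) : ℝ :=
  if τ ω ≤ (N : ℕ∞) then ((1 + r) ^ (τ ω).toNat)⁻¹ * (k - S (τ ω).toNat ω) else 0

section RunningExtrema

variable {Ω : Type*} (K : ℕ → Ω → ℝ) {s t u : ℕ} (ω : Ω)

theorem runMax_neg : runMax (fun v ω' => -K v ω') t u ω = -runMin K t u ω :=
  Finset.fold_hom fun a b => (max_neg_neg a b).symm

theorem runMin_le {v : ℕ} (htv : t ≤ v) (hvu : v ≤ u) : runMin K t u ω ≤ K v ω :=
  (Finset.fold_min_le _).2 <| Or.inr ⟨v, Finset.mem_Icc.2 ⟨htv, hvu⟩, le_rfl⟩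

theorem le_runMin {c : ℝ} (htu : t ≤ u) (h : ∀ v, t ≤ v → v ≤ u → c ≤ K v ω) :
    c ≤ runMin K t u ω :=
  (Finset.le_fold_min _).2
    ⟨h t le_rfl htu, fun v hv => h v (Finset.mem_Icc.1 hv).1 (Finset.mem_Icc.1 hv).2⟩

theorem runMin_succ (htu : t ≤ u + 1) :
    runMin K t (u + 1) ω = min (K (u + 1) ω) (runMin K t u ω) := by
  rw [runMin, runMin, ← Finset.insert_Icc_right_eq_Icc_add_one htu,
    Finset.fold_insert (by simp)]

theorem runMin_mono_left (hst : s ≤ t) (htu : t ≤ u) : runMin K s u ω ≤ runMin K t u ω :=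
  le_runMin K ω htu fun _ htv hvu => runMin_le K ω (hst.trans htv) hvu

theorem runMin_eq_of_runMin_eq (hst : s ≤ t) (htu : t ≤ u) (h : runMin K s t ω = K t ω) :
    runMin K s u ω = runMin K t u ω := by
  refine (runMin_mono_left K ω hst htu).antisymm (le_runMin K ω (hst.trans htu) fun v hsv hvu => ?_)
  rcases le_or_gt v t with hvt | htv
  · calc runMin K t u ω ≤ K t ω := runMin_le K ω le_rfl htu
      _ = runMin K s t ω := h.symm
      _ ≤ K v ω := runMin_le K ω hsv hvt
  · exact runMin_le K ω htv.le hvu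

theorem runMin_induction {P : (Ω → ℝ) → Prop} (hP : ∀ f g, P f → P g → P (f ⊓ g))
    (hK : ∀ v, t ≤ v → v ≤ u → P (K v)) (htu : t ≤ u) : P (runMin K t u) := by
  induction u, htu using Nat.le_induction with
  | base =>
    have hself : runMin K t t = K t := funext fun ω => by simp [runMin]
    exact hself ▸ hK t le_rfl le_rfl
  | succ n htn ih =>
    have hsucc : runMin K t (n + 1) = K (n + 1) ⊓ runMin K t n :=
      funext fun ω => runMin_succ K ω (by omega)
    rw [hsucc]
    exact hP _ _ (hK _ (by omega) le_rfl) (ih fun v htv hvn => hK v htv (by omega))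

theorem stronglyMeasurable_runMin {m : MeasurableSpace Ω}
    (hK : ∀ v, t ≤ v → v ≤ u → StronglyMeasurable[m] (K v)) (htu : t ≤ u) :
    StronglyMeasurable[m] (runMin K t u) :=
  runMin_induction K (fun _ _ => StronglyMeasurable.inf) hK htu

theorem memLp_runMin {m : MeasurableSpace Ω} {μ : Measure Ω}
    (hK : ∀ v, t ≤ v → v ≤ u → MemLp (K v) 2 μ) (htu : t ≤ u) : MemLp (runMin K t u) 2 μ :=
  runMin_induction K (P := fun f => MemLp f 2 μ) (fun _ _ => MemLp.inf) hK htu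

end RunningExtrema

noncomputable def discountedSum (r : ℝ) (t N : ℕ) (f : ℕ → ℝ) : ℝ :=
  (∑ u ∈ Finset.Ico t N, r / (1 + r) * ((1 + r) ^ u)⁻¹ * f u) + ((1 + r) ^ N)⁻¹ * f N

section DiscountedSum

variable {r : ℝ} {s t N : ℕ} {f g : ℕ → ℝ}

theorem discountedSum_const (hr : 1 + r ≠ 0) (htN : t ≤ N) (c : ℝ) :
    discountedSum r t N (fun _ => c) = ((1 + r) ^ t)⁻¹ * c := by
  induction N, htN using Nat.le_induction with
  | base => simp [discountedSum]
  | succ n htn ih =>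
    have hweights : r / (1 + r) * ((1 + r) ^ n)⁻¹ + ((1 + r) ^ (n + 1))⁻¹ = ((1 + r) ^ n)⁻¹ := by
      field_simp
      ring
    rw [← ih, discountedSum, discountedSum, Finset.sum_Ico_succ_top htn]
    linear_combination c * hweights

theorem discountedSum_add :
    discountedSum r t N (fun u => f u + g u) = discountedSum r t N f + discountedSum r t N g := by
  simp only [discountedSum, mul_add, Finset.sum_add_distrib]
  ring

theorem discountedSum_congr (h : ∀ u, t ≤ u → u ≤ N → f u = g u) (htN : t ≤ N) :
    discountedSum r t N f = discountedSum r t N g := by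
  rw [discountedSum, discountedSum, h N htN le_rfl]
  congr 1
  exact Finset.sum_congr rfl fun u hu => by
    rw [h u (Finset.mem_Ico.1 hu).1 (Finset.mem_Ico.1 hu).2.le]

theorem discountedSum_le_discountedSum (hr : 0 ≤ r) (h : ∀ u, t ≤ u → u ≤ N → f u ≤ g u)
    (htN : t ≤ N) : discountedSum r t N f ≤ discountedSum r t N g := by
  refine add_le_add (Finset.sum_le_sum fun u hu => ?_) ?_
  · exact mul_le_mul_of_nonneg_left (h u (Finset.mem_Ico.1 hu).1 (Finset.mem_Ico.1 hu).2.le)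
      (by positivity)
  · exact mul_le_mul_of_nonneg_left (h N htN le_rfl) (by positivity)

theorem discountedSum_nonneg (hr : 0 ≤ r) (h : ∀ u, t ≤ u → u ≤ N → 0 ≤ f u) (htN : t ≤ N) :
    0 ≤ discountedSum r t N f := by
  simpa [discountedSum] using discountedSum_le_discountedSum (f := 0) hr h htN

theorem discountedSum_eq_sum_add (hst : s ≤ t) (htN : t ≤ N) :
    discountedSum r s N f =
      (∑ u ∈ Finset.Ico s t, r / (1 + r) * ((1 + r) ^ u)⁻¹ * f u) + discountedSum r t N f := by
  rw [discountedSum, discountedSum, ← Finset.sum_Ico_consecutive _ hst htN, add_assoc]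

variable {Ω : Type*} {m : MeasurableSpace Ω} {μ : Measure Ω} {F : ℕ → Ω → ℝ}

theorem StronglyMeasurable.discountedSum (hF : ∀ u, t ≤ u → u ≤ N → StronglyMeasurable[m] (F u))
    (htN : t ≤ N) : StronglyMeasurable[m] fun ω => discountedSum r t N fun u => F u ω := by
  refine (Finset.stronglyMeasurable_fun_sum _ fun u hu => ?_).add ((hF N htN le_rfl).const_mul _)
  exact (hF u (Finset.mem_Ico.1 hu).1 (Finset.mem_Ico.1 hu).2.le).const_mul _

theorem MemLp.discountedSum (hF : ∀ u, t ≤ u → u ≤ N → MemLp (F u) 2 μ) (htN : t ≤ N) :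
    MemLp (fun ω => discountedSum r t N fun u => F u ω) 2 μ := by
  refine (memLp_finsetSum _ fun u hu => ?_).add ((hF N htN le_rfl).const_mul _)
  exact (hF u (Finset.mem_Ico.1 hu).1 (Finset.mem_Ico.1 hu).2.le).const_mul _

end DiscountedSum

theorem exists_le_of_iInf_le {N t : ℕ} {p : ℕ → Prop}
    (h : ⨅ (s : ℕ) (_ : s ≤ N ∧ p s), (s : ℕ∞) ≤ t) : ∃ s ≤ t, p s := by
  obtain ⟨s, hs⟩ := iInf_lt_iff.1 (h.trans_lt (Nat.cast_lt.2 t.lt_succ_self))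
  obtain ⟨⟨_, hps⟩, hst⟩ := iInf_lt_iff.1 hs
  exact ⟨s, Nat.lt_succ_iff.1 (Nat.cast_lt.1 hst), hps⟩

theorem not_of_lt_of_le_iInf {N v : ℕ} {p : ℕ → Prop} {a : ℕ∞} (hvN : v ≤ N) (hva : (v : ℕ∞) < a)
    (ha : a ≤ ⨅ (s : ℕ) (_ : s ≤ N ∧ p s), (s : ℕ∞)) : ¬p v :=
  fun hpv => (hva.trans_le (ha.trans (iInf₂_le v ⟨hvN, hpv⟩))).false

section Claims

variable {Ω : Type*} {r k : ℝ} {K : ℕ → Ω → ℝ} {t N : ℕ}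

noncomputable def exerciseClaim (r k : ℝ) (K : ℕ → Ω → ℝ) (t N : ℕ) (ω : Ω) : ℝ :=
  discountedSum r t N fun u => k - runMin K t u ω

noncomputable def valueClaim (r k : ℝ) (K : ℕ → Ω → ℝ) (N : ℕ) (ω : Ω) : ℝ :=
  discountedSum r 0 N fun u => max (k - runMin K 0 u ω) 0

theorem exerciseClaim_le_valueClaim (hr : 0 ≤ r) (htN : t ≤ N) (ω : Ω) :
    exerciseClaim r k K t N ω ≤ valueClaim r k K N ω := by
  rw [exerciseClaim, valueClaim, discountedSum_eq_sum_add (Nat.zero_le t) htN]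
  refine le_add_of_nonneg_of_le (Finset.sum_nonneg fun u _ => by positivity) ?_
  refine discountedSum_le_discountedSum hr (fun u htu _ => ?_) htN
  exact (sub_le_sub_left (runMin_mono_left K ω (Nat.zero_le t) htu) k).trans (le_max_left _ _)

theorem exerciseClaim_eq_valueClaim (htN : t ≤ N) {ω : Ω} (hbefore : ∀ v < t, k ≤ K v ω)
    (hKt : K t ω ≤ k) (hmin : runMin K 0 t ω = K t ω) :
    exerciseClaim r k K t N ω = valueClaim r k K N ω := by
  have hbefore' : ∀ u < t, max (k - runMin K 0 u ω) 0 = 0 := fun u hut =>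
    max_eq_right <| sub_nonpos.2 <|
      le_runMin K ω (Nat.zero_le u) fun v _ hvu => hbefore v (hvu.trans_lt hut)
  have hafter : ∀ u, t ≤ u → u ≤ N → k - runMin K t u ω = max (k - runMin K 0 u ω) 0 := by
    intro u htu _
    rw [runMin_eq_of_runMin_eq K ω (Nat.zero_le t) htu hmin, max_eq_left]
    linarith [runMin_le K ω le_rfl htu]
  rw [exerciseClaim, valueClaim, discountedSum_eq_sum_add (Nat.zero_le t) htN,
    Finset.sum_eq_zero fun u hu => by rw [hbefore' u (Finset.mem_Ico.1 hu).2, mul_zero], zero_add]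
  exact discountedSum_congr hafter htN

theorem valueClaim_nonneg (hr : 0 ≤ r) (ω : Ω) : 0 ≤ valueClaim r k K N ω :=
  discountedSum_nonneg hr (fun _ _ _ => le_max_right _ _) (Nat.zero_le N)

theorem valueClaim_eq_zero {ω : Ω} (h : ∀ v ≤ N, k ≤ K v ω) : valueClaim r k K N ω = 0 := by
  rw [valueClaim, discountedSum_congr (g := fun _ => 0) (fun u _ huN => max_eq_right <|
    sub_nonpos.2 <| le_runMin K ω (Nat.zero_le u) fun v _ hvu => h v (hvu.trans huN))
    (Nat.zero_le N)]
  simp [discountedSum]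

theorem exerciseClaim_eq_valueClaim_of_iInf (htN : t ≤ N) {ω : Ω}
    (hlow : ⨅ (s : ℕ) (_ : s ≤ N ∧ K s ω ≤ k), (s : ℕ∞) ≤ t)
    (hbar : (t : ℕ∞) ≤ ⨅ (s : ℕ) (_ : s ≤ N ∧ K s ω < k), (s : ℕ∞))
    (hmin : runMin K 0 t ω = K t ω) : exerciseClaim r k K t N ω = valueClaim r k K N ω := by
  obtain ⟨s, hst, hKs⟩ := exists_le_of_iInf_le hlow
  refine exerciseClaim_eq_valueClaim htN (fun v hvt => ?_)
    ((hmin ▸ runMin_le K ω (Nat.zero_le s) hst).trans hKs) hmin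
  exact not_lt.1 (not_of_lt_of_le_iInf (hvt.le.trans htN) (Nat.cast_lt.2 hvt) hbar)

theorem valueClaim_eq_zero_of_iInf {ω : Ω}
    (hbar : (N : ℕ∞) < ⨅ (s : ℕ) (_ : s ≤ N ∧ K s ω < k), (s : ℕ∞)) :
    valueClaim r k K N ω = 0 :=
  valueClaim_eq_zero fun _ hvN =>
    not_lt.1 (not_of_lt_of_le_iInf hvN ((Nat.cast_le.2 hvN).trans_lt hbar) le_rfl)

variable {m : MeasurableSpace Ω} {μ : Measure Ω} [IsFiniteMeasure μ]

theorem stronglyMeasurable_exerciseClaim (hK : ∀ v ≤ N, StronglyMeasurable[m] (K v))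
    (htN : t ≤ N) : StronglyMeasurable[m] (exerciseClaim r k K t N) :=
  StronglyMeasurable.discountedSum (fun _ htu huN => stronglyMeasurable_const.sub <|
    stronglyMeasurable_runMin K (fun v _ hvu => hK v (hvu.trans huN)) htu) htN

theorem memLp_exerciseClaim (hK : ∀ v ≤ N, MemLp (K v) 2 μ) (htN : t ≤ N) :
    MemLp (exerciseClaim r k K t N) 2 μ :=
  MemLp.discountedSum (fun _ htu huN => (memLp_const k).sub <|
    memLp_runMin K (fun v _ hvu => hK v (hvu.trans huN)) htu) htN

theorem stronglyMeasurable_valueClaim (hK : ∀ v ≤ N, StronglyMeasurable[m] (K v)) :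
    StronglyMeasurable[m] (valueClaim r k K N) :=
  StronglyMeasurable.discountedSum (fun u _ huN => (stronglyMeasurable_const.sub <|
    stronglyMeasurable_runMin K (fun v _ hvu => hK v (hvu.trans huN)) (Nat.zero_le u)).sup
      stronglyMeasurable_const) (Nat.zero_le N)

theorem memLp_valueClaim (hK : ∀ v ≤ N, MemLp (K v) 2 μ) : MemLp (valueClaim r k K N) 2 μ :=
  MemLp.discountedSum (fun u _ huN => ((memLp_const k).sub <|
    memLp_runMin K (fun v _ hvu => hK v (hvu.trans huN)) (Nat.zero_le u)).sup (memLp_const 0))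
    (Nat.zero_le N)

end Claims

theorem measurableSet_lt_of_measurableSet_eq {Ω : Type*} {m0 : MeasurableSpace Ω}
    {F : Filtration ℕ m0} {N t : ℕ} {τ : Ω → ℕ∞}
    (hτ : ∀ t ≤ N, MeasurableSet[F t] {ω | τ ω = t}) (ht : t ≤ N + 1) :
    MeasurableSet[F N] {ω | τ ω < t} := by
  induction t with
  | zero => simp
  | succ t ih =>
    have hunion : {ω | τ ω < ↑(t + 1)} = {ω | τ ω = t} ∪ {ω | τ ω < t} := by
      ext ω
      simp [ENat.lt_natCast_add_one_iff, le_iff_eq_or_lt]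
    rw [hunion]
    exact (F.mono (by omega) _ (hτ t (by omega))).union (ih (by omega))

namespace NLExp

variable {Ω : Type*} {m0 : MeasurableSpace Ω} {μ : Measure Ω} {F : Filtration ℕ m0} {N : ℕ}
  (EE : NLExp μ F N) {s t : ℕ} {ξ η ζ : Ω → ℝ} {A : Set Ω}

theorem E_zero (ht : t ≤ N) : EE.E t 0 =ᵐ[μ] 0 := by
  have h0 : StronglyMeasurable[F N] (0 : Ω → ℝ) := stronglyMeasurable_zero
  have htrans := EE.translation t ht 0 (EE.E t 0) h0 MemLp.zero
    (EE.adapted t ht 0 h0 MemLp.zero) (EE.sqInt t ht 0 h0 MemLp.zero)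
  rw [zero_add] at htrans
  filter_upwards [htrans, EE.tower t t le_rfl ht 0 h0 MemLp.zero] with ω h1 h2
  simp only [Pi.add_apply, Pi.zero_apply] at h1 ⊢
  linarith

theorem E_of_stronglyMeasurable (ht : t ≤ N) (hζ : StronglyMeasurable[F t] ζ)
    (hζ2 : MemLp ζ 2 μ) : EE.E t ζ =ᵐ[μ] ζ := by
  have htrans := EE.translation t ht 0 ζ stronglyMeasurable_zero MemLp.zero hζ hζ2
  rw [zero_add] at htrans
  filter_upwards [htrans, EE.E_zero ht] with ω h1 h2
  rw [h1, Pi.add_apply, h2, Pi.zero_apply, zero_add]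

theorem E_congr (ht : t ≤ N) (hξ : StronglyMeasurable[F N] ξ) (hξ2 : MemLp ξ 2 μ)
    (hη : StronglyMeasurable[F N] η) (hη2 : MemLp η 2 μ) (h : ξ =ᵐ[μ] η) :
    EE.E t ξ =ᵐ[μ] EE.E t η :=
  (EE.mono t ht ξ η hξ hξ2 hη hη2 h.le).antisymm (EE.mono t ht η ξ hη hη2 hξ hξ2 h.symm.le)

theorem E_piecewise [DecidablePred (· ∈ A)] (ht : t ≤ N) (hA : MeasurableSet[F t] A)
    (hξ : StronglyMeasurable[F N] ξ) (hξ2 : MemLp ξ 2 μ)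
    (hη : StronglyMeasurable[F N] η) (hη2 : MemLp η 2 μ) :
    EE.E t (A.piecewise ξ η) =ᵐ[μ] A.piecewise (EE.E t ξ) (EE.E t η) := by
  simpa only [Set.indicator_add_compl_eq_piecewise] using
    EE.zeroOne t ht ξ η hξ hξ2 hη hη2 A hA

theorem E_eq_on_of_eq_on (ht : t ≤ N) (hA : MeasurableSet[F t] A)
    (hξ : StronglyMeasurable[F N] ξ) (hξ2 : MemLp ξ 2 μ)
    (hη : StronglyMeasurable[F N] η) (hη2 : MemLp η 2 μ) (h : ∀ᵐ ω ∂μ, ω ∈ A → ξ ω = η ω) :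
    ∀ᵐ ω ∂μ, ω ∈ A → EE.E t ξ ω = EE.E t η ω := by
  classical
  have hpw : A.piecewise ξ η =ᵐ[μ] η := by
    filter_upwards [h] with ω hω
    by_cases hωA : ω ∈ A <;> simp [hωA, hω]
  have hE := EE.E_congr ht (hξ.piecewise (F.mono ht _ hA) hη)
    ((hξ2.restrict _).piecewise (F.le t _ hA) (hη2.restrict _)) hη hη2 hpw
  filter_upwards [EE.E_piecewise ht hA hξ hξ2 hη hη2, hE] with ω h1 h2 hωA
  simpa [hωA] using h1.symm.trans h2

theorem E_piecewise_le [DecidablePred (· ∈ A)] (ht : t ≤ N) (hA : MeasurableSet[F t] A)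
    (hξ : StronglyMeasurable[F N] ξ) (hξ2 : MemLp ξ 2 μ)
    (hη : StronglyMeasurable[F N] η) (hη2 : MemLp η 2 μ)
    (hζ : StronglyMeasurable[F N] ζ) (hζ2 : MemLp ζ 2 μ)
    (h : ∀ᵐ ω ∂μ, ω ∈ A → EE.E t ξ ω ≤ EE.E t η ω) :
    EE.E t (A.piecewise ξ ζ) ≤ᵐ[μ] EE.E t (A.piecewise η ζ) := by
  filter_upwards [EE.E_piecewise ht hA hξ hξ2 hζ hζ2, EE.E_piecewise ht hA hη hη2 hζ hζ2, h]
    with ω h1 h2 h3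
  rw [h1, h2]
  by_cases hωA : ω ∈ A <;> simp [hωA, h3]

theorem E_le_of_E_le (hst : s ≤ t) (ht : t ≤ N)
    (hξ : StronglyMeasurable[F N] ξ) (hξ2 : MemLp ξ 2 μ)
    (hη : StronglyMeasurable[F N] η) (hη2 : MemLp η 2 μ) (h : EE.E t ξ ≤ᵐ[μ] EE.E t η) :
    EE.E s ξ ≤ᵐ[μ] EE.E s η := by
  have hle := EE.mono s (hst.trans ht) _ _ ((EE.adapted t ht ξ hξ hξ2).mono (F.mono ht))
    (EE.sqInt t ht ξ hξ hξ2) ((EE.adapted t ht η hη hη2).mono (F.mono ht))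
    (EE.sqInt t ht η hη hη2) h
  filter_upwards [EE.tower s t hst ht ξ hξ hξ2, EE.tower s t hst ht η hη hη2, hle]
    with ω h1 h2 h3
  rwa [← h1, ← h2]

/-- The claims `Rₜ`, equal to `ξ` on `{τ < t}` and to `η` elsewhere, run from `R₀ = η` to
`R_{N+1} ≥ ξ`, and `E₀[Rₜ₊₁] ≤ E₀[Rₜ]` because the two differ only on `{τ = t} ∈ Fₜ`. -/
theorem E_zero_le_of_E_le_on_eq {τ : Ω → ℕ∞} (hτ : ∀ t ≤ N, MeasurableSet[F t] {ω | τ ω = t})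
    (hξ : StronglyMeasurable[F N] ξ) (hξ2 : MemLp ξ 2 μ)
    (hη : StronglyMeasurable[F N] η) (hη2 : MemLp η 2 μ)
    (hle : ∀ t ≤ N, ∀ᵐ ω ∂μ, τ ω = t → EE.E t ξ ω ≤ EE.E t η ω)
    (hlate : ∀ᵐ ω ∂μ, (N : ℕ∞) < τ ω → ξ ω ≤ η ω) :
    EE.E 0 ξ ≤ᵐ[μ] EE.E 0 η := by
  classical
  let R : ℕ → Ω → ℝ := fun t => {ω | τ ω < t}.piecewise ξ η
  have hR : ∀ t ≤ N + 1, StronglyMeasurable[F N] (R t) :=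
    fun t ht => hξ.piecewise (measurableSet_lt_of_measurableSet_eq hτ ht) hη
  have hR2 : ∀ t ≤ N + 1, MemLp (R t) 2 μ := fun t ht => (hξ2.restrict _).piecewise
    (F.le N _ (measurableSet_lt_of_measurableSet_eq hτ ht)) (hη2.restrict _)
  have hstep : ∀ t ≤ N, EE.E t (R (t + 1)) ≤ᵐ[μ] EE.E t (R t) := by
    intro t ht
    have hsucc : R (t + 1) = {ω | τ ω = t}.piecewise ξ (R t) := by
      ext ω
      by_cases h : τ ω = t <;>
        simp [R, Set.piecewise, ENat.lt_natCast_add_one_iff, le_iff_eq_or_lt, h]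
    have hself : R t = {ω | τ ω = t}.piecewise η (R t) := by
      ext ω
      by_cases h : τ ω = t <;> simp [R, Set.piecewise, h]
    have := EE.E_piecewise_le ht (hτ t ht) hξ hξ2 hη hη2 (hR t (by omega)) (hR2 t (by omega))
      (hle t ht)
    rwa [← hsucc, ← hself] at this
  have hchain : ∀ t ≤ N + 1, EE.E 0 (R t) ≤ᵐ[μ] EE.E 0 η := by
    intro t ht
    induction t with
    | zero =>
      have hR0 : R 0 = η := funext fun ω => Set.piecewise_eq_of_notMem _ _ _ (by simp)
      exact hR0 ▸ EventuallyLE.refl _ _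
    | succ t ih =>
      exact (EE.E_le_of_E_le (Nat.zero_le t) (by omega) (hR _ ht) (hR2 _ ht) (hR t (by omega))
        (hR2 t (by omega)) (hstep t (by omega))).trans (ih (by omega))
  have hξR : ξ ≤ᵐ[μ] R (N + 1) := by
    filter_upwards [hlate] with ω hω
    by_cases h : τ ω < ↑(N + 1)
    · exact (Set.piecewise_eq_of_mem {ω | τ ω < ↑(N + 1)} ξ η h).ge
    · rw [show R (N + 1) ω = η ω from Set.piecewise_eq_of_notMem _ _ _ h]
      exact hω ((Nat.cast_lt.2 N.lt_succ_self).trans_le (not_lt.1 h))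
  exact (EE.mono 0 (Nat.zero_le N) _ _ hξ hξ2 (hR _ le_rfl) (hR2 _ le_rfl) hξR).trans
    (hchain _ le_rfl)

end NLExp

noncomputable def discountedPayoff {Ω : Type*} (r k : ℝ) (S : ℕ → Ω → ℝ) (t : ℕ) (ω : Ω) : ℝ :=
  ((1 + r) ^ t)⁻¹ * (k - S t ω)

section AmericanPut

variable {Ω : Type*} {m0 : MeasurableSpace Ω} {μ : Measure Ω} [IsFiniteMeasure μ]
  {F : Filtration ℕ m0} {N : ℕ} {r k : ℝ} {S K : ℕ → Ω → ℝ} {t : ℕ} {τ : Ω → ℕ∞}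

theorem putPayoff_of_eq {ω : Ω} (htN : t ≤ N) (h : τ ω = t) :
    putPayoff r k S N τ ω = discountedPayoff r k S t ω := by
  simp [putPayoff, discountedPayoff, h, htN]

theorem putPayoff_of_lt {ω : Ω} (h : (N : ℕ∞) < τ ω) : putPayoff r k S N τ ω = 0 :=
  if_neg h.not_ge

theorem putPayoff_eq_sum_indicator :
    putPayoff r k S N τ =
      ∑ t ∈ Finset.range (N + 1), {ω | τ ω = t}.indicator (discountedPayoff r k S t) := by
  ext ω
  rw [Finset.sum_apply]
  rcases le_or_gt (τ ω) N with h | h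
  · obtain ⟨n, hn⟩ := ENat.ne_top_iff_exists.1 (ne_top_of_le_ne_top (ENat.natCast_ne_top N) h)
    have hnN : n ≤ N := by exact_mod_cast hn ▸ h
    rw [putPayoff_of_eq hnN hn.symm, Finset.sum_eq_single_of_mem n (by simpa [Nat.lt_succ_iff])
      fun t _ htn => Set.indicator_of_notMem (by simp [← hn, Ne.symm htn]) _,
      Set.indicator_of_mem (by simp [← hn])]
  · refine (putPayoff_of_lt h).trans (Finset.sum_eq_zero fun t ht => ?_).symm
    refine Set.indicator_of_notMem (fun hτt => h.not_ge ?_) _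
    rw [show τ ω = t from hτt]
    exact Nat.cast_le.2 (Nat.lt_succ_iff.1 (Finset.mem_range.1 ht))

theorem stronglyMeasurable_discountedPayoff {m : MeasurableSpace Ω}
    (hS : StronglyMeasurable[m] (S t)) : StronglyMeasurable[m] (discountedPayoff r k S t) :=
  (stronglyMeasurable_const.sub hS).const_mul _

theorem memLp_discountedPayoff (hS : MemLp (fun ω => ((1 + r) ^ t)⁻¹ * S t ω) 2 μ) :
    MemLp (discountedPayoff r k S t) 2 μ := by
  convert (memLp_const (((1 + r) ^ t)⁻¹ * k)).sub hS using 1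
  ext ω
  simp only [discountedPayoff, Pi.sub_apply]
  ring

theorem stronglyMeasurable_putPayoff (hS : ∀ t ≤ N, StronglyMeasurable[F t] (S t))
    (hτ : ∀ t ≤ N, MeasurableSet[F t] {ω | τ ω = t}) :
    StronglyMeasurable[F N] (putPayoff r k S N τ) := by
  rw [putPayoff_eq_sum_indicator]
  refine Finset.stronglyMeasurable_sum _ fun t ht => ?_
  have htN : t ≤ N := Nat.lt_succ_iff.1 (Finset.mem_range.1 ht)
  exact ((stronglyMeasurable_discountedPayoff (hS t htN)).mono (F.mono htN)).indicator
    (F.mono htN _ (hτ t htN))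

theorem memLp_putPayoff (hS : ∀ t ≤ N, MemLp (fun ω => ((1 + r) ^ t)⁻¹ * S t ω) 2 μ)
    (hτ : ∀ t ≤ N, MeasurableSet[F t] {ω | τ ω = t}) :
    MemLp (putPayoff r k S N τ) 2 μ := by
  rw [putPayoff_eq_sum_indicator]
  refine memLp_finsetSum' _ fun t ht => ?_
  have htN : t ≤ N := Nat.lt_succ_iff.1 (Finset.mem_range.1 ht)
  exact (memLp_discountedPayoff (hS t htN)).indicator (F.le t _ (hτ t htN))

end AmericanPut

namespace NLExp

variable {Ω : Type*} {m0 : MeasurableSpace Ω} {μ : Measure Ω} [IsFiniteMeasure μ]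
  {F : Filtration ℕ m0} {N : ℕ} (EE : NLExp μ F N) {r k : ℝ} {S K : ℕ → Ω → ℝ} {t : ℕ}
  {τ : Ω → ℕ∞}

theorem discountedPayoff_ae_eq_E_exerciseClaim (hr : 1 + r ≠ 0)
    (hK : ∀ v ≤ N, StronglyMeasurable[F N] (K v)) (hK2 : ∀ v ≤ N, MemLp (K v) 2 μ)
    (hK_rep : (fun ω => -(((1 + r) ^ t)⁻¹ * S t ω)) =ᵐ[μ]
      EE.E t fun ω => discountedSum r t N fun u => runMax (fun v ω' => -K v ω') t u ω)
    (htN : t ≤ N) : discountedPayoff r k S t =ᵐ[μ] EE.E t (exerciseClaim r k K t N) := by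
  set Φ : Ω → ℝ := fun ω => discountedSum r t N fun u => runMax (fun v ω' => -K v ω') t u ω
  have hsplit : ∀ ω, exerciseClaim r k K t N ω = Φ ω + ((1 + r) ^ t)⁻¹ * k := fun ω => by
    simp only [Φ, exerciseClaim, sub_eq_add_neg k, runMax_neg, discountedSum_add,
      discountedSum_const hr htN]
    ring
  have hΦ : Φ = fun ω => exerciseClaim r k K t N ω - ((1 + r) ^ t)⁻¹ * k :=
    funext fun ω => by rw [hsplit]; ring
  have htrans := EE.translation t htN Φ (fun _ => ((1 + r) ^ t)⁻¹ * k)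
    (hΦ ▸ (stronglyMeasurable_exerciseClaim hK htN).sub stronglyMeasurable_const)
    (hΦ ▸ (memLp_exerciseClaim hK2 htN).sub (memLp_const _)) stronglyMeasurable_const
    (memLp_const _)
  rw [show Φ + (fun _ => ((1 + r) ^ t)⁻¹ * k) = exerciseClaim r k K t N from
    funext fun ω => (hsplit ω).symm] at htrans
  filter_upwards [hK_rep, htrans] with ω h1 h2
  rw [h2, Pi.add_apply, ← h1, discountedPayoff]
  ring

theorem E_putPayoff_eq_on (hS : ∀ t ≤ N, StronglyMeasurable[F t] (S t))
    (hS2 : ∀ t ≤ N, MemLp (fun ω => ((1 + r) ^ t)⁻¹ * S t ω) 2 μ)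
    (hτ : ∀ t ≤ N, MeasurableSet[F t] {ω | τ ω = t})
    (hrep : discountedPayoff r k S t =ᵐ[μ] EE.E t (exerciseClaim r k K t N)) (htN : t ≤ N) :
    ∀ᵐ ω ∂μ, τ ω = t → EE.E t (putPayoff r k S N τ) ω = EE.E t (exerciseClaim r k K t N) ω := by
  have hP := stronglyMeasurable_discountedPayoff (r := r) (k := k) (hS t htN)
  have hP2 := memLp_discountedPayoff (k := k) (hS2 t htN)
  have hloc := EE.E_eq_on_of_eq_on htN (hτ t htN) (stronglyMeasurable_putPayoff hS hτ)
    (memLp_putPayoff hS2 hτ) (hP.mono (F.mono htN)) hP2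
    (Eventually.of_forall fun _ => putPayoff_of_eq htN)
  filter_upwards [hloc, EE.E_of_stronglyMeasurable htN hP hP2, hrep] with ω h1 h2 h3 hω
  rw [h1 hω, h2, h3]

theorem E_zero_putPayoff_le_valueClaim (hr : 0 ≤ r)
    (hS : ∀ t ≤ N, StronglyMeasurable[F t] (S t))
    (hS2 : ∀ t ≤ N, MemLp (fun ω => ((1 + r) ^ t)⁻¹ * S t ω) 2 μ)
    (hK : ∀ v ≤ N, StronglyMeasurable[F N] (K v)) (hK2 : ∀ v ≤ N, MemLp (K v) 2 μ)
    (hrep : ∀ t ≤ N, discountedPayoff r k S t =ᵐ[μ] EE.E t (exerciseClaim r k K t N))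
    (hτ : ∀ t ≤ N, MeasurableSet[F t] {ω | τ ω = t}) :
    EE.E 0 (putPayoff r k S N τ) ≤ᵐ[μ] EE.E 0 (valueClaim r k K N) := by
  refine EE.E_zero_le_of_E_le_on_eq hτ (stronglyMeasurable_putPayoff hS hτ)
    (memLp_putPayoff hS2 hτ) (stronglyMeasurable_valueClaim hK) (memLp_valueClaim hK2)
    (fun t htN => ?_)
    (Eventually.of_forall fun ω h => (putPayoff_of_lt h).trans_le (valueClaim_nonneg hr ω))
  have hWV := EE.mono t htN _ _ (stronglyMeasurable_exerciseClaim hK htN)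
    (memLp_exerciseClaim hK2 htN) (stronglyMeasurable_valueClaim hK) (memLp_valueClaim hK2)
    (Eventually.of_forall (exerciseClaim_le_valueClaim (k := k) (K := K) hr htN))
  filter_upwards [EE.E_putPayoff_eq_on hS hS2 hτ (hrep t htN) htN, hWV] with ω h1 h2 hω
  exact (h1 hω).trans_le h2

theorem E_zero_valueClaim_le_putPayoff
    (hS : ∀ t ≤ N, StronglyMeasurable[F t] (S t))
    (hS2 : ∀ t ≤ N, MemLp (fun ω => ((1 + r) ^ t)⁻¹ * S t ω) 2 μ)
    (hK : ∀ v ≤ N, StronglyMeasurable[F N] (K v)) (hK2 : ∀ v ≤ N, MemLp (K v) 2 μ)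
    (hrep : ∀ t ≤ N, discountedPayoff r k S t =ᵐ[μ] EE.E t (exerciseClaim r k K t N))
    (hτ : ∀ t ≤ N, MeasurableSet[F t] {ω | τ ω = t})
    (hW : ∀ t ≤ N, ∀ᵐ ω ∂μ, τ ω = t → exerciseClaim r k K t N ω = valueClaim r k K N ω)
    (hV : ∀ᵐ ω ∂μ, (N : ℕ∞) < τ ω → valueClaim r k K N ω = 0) :
    EE.E 0 (valueClaim r k K N) ≤ᵐ[μ] EE.E 0 (putPayoff r k S N τ) := by
  refine EE.E_zero_le_of_E_le_on_eq hτ (stronglyMeasurable_valueClaim hK) (memLp_valueClaim hK2)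
    (stronglyMeasurable_putPayoff hS hτ) (memLp_putPayoff hS2 hτ) (fun t htN => ?_)
    (hV.mono fun ω h hω => ((h hω).trans (putPayoff_of_lt hω).symm).le)
  have hloc := EE.E_eq_on_of_eq_on htN (hτ t htN) (stronglyMeasurable_valueClaim hK)
    (memLp_valueClaim hK2) (stronglyMeasurable_exerciseClaim hK htN) (memLp_exerciseClaim hK2 htN)
    ((hW t htN).mono fun _ h hω => (h hω).symm)
  filter_upwards [hloc, EE.E_putPayoff_eq_on hS hS2 hτ (hrep t htN) htN] with ω h1 h2 hω
  exact ((h1 hω).trans (h2 hω).symm).le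

end NLExp

theorem american_put_optimal_exercise_general
{Ω : Type*}
    [m0 : MeasurableSpace Ω]
    (μ : Measure Ω) [IsProbabilityMeasure μ]
    (F : Filtration ℕ m0) (N : ℕ)
    (EE : NLExp μ F N)
    (r : ℝ) (hr : 0 < r)
    (S : ℕ → Ω → ℝ)
    (hS_adapted : ∀ t, t ≤ N → StronglyMeasurable[F t] (S t))
    (hS_sqInt : ∀ t, t ≤ N → MemLp (fun ω => ((1 + r) ^ t)⁻¹ * S t ω) 2 μ)
(K : ℕ → Ω → ℝ)
    (hK_adapted : ∀ t, t ≤ N → StronglyMeasurable[F t] (K t))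
    (hK_sqInt : ∀ t, t ≤ N → MemLp (K t) 2 μ)
    (hK_rep : ∀ t, t ≤ N →
      (fun ω => -(((1 + r) ^ t)⁻¹ * S t ω)) =ᵐ[μ] EE.E t fun ω =>
        (∑ u ∈ Finset.Ico t N,
          r / (1 + r) * ((1 + r) ^ u)⁻¹ * runMax (fun v ω' => -K v ω') t u ω)
        + ((1 + r) ^ N)⁻¹ * runMax (fun v ω' => -K v ω') t N ω)
    (k : ℝ)
    (τlowk τbark : Ω → ℕ∞)
    (hτlowk_def : ∀ ω, τlowk ω = ⨅ (t : ℕ) (_ : t ≤ N ∧ K t ω ≤ k), (t : ℕ∞))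
    (hτbark_def : ∀ ω, τbark ω = ⨅ (t : ℕ) (_ : t ≤ N ∧ K t ω < k), (t : ℕ∞))
    (τk : Ω → ℕ∞)
    (hτk_meas : ∀ t : ℕ, t ≤ N → MeasurableSet[F t] {ω | τk ω = (t : ℕ∞)})
    (hbetween : ∀ᵐ ω ∂μ, τlowk ω ≤ τk ω ∧ τk ω ≤ τbark ω)
    (hmin : ∀ᵐ ω ∂μ, τk ω ≤ (N : ℕ∞) →
      runMin K 0 (τk ω).toNat ω = K (τk ω).toNat ω) :
    ∀ τ : Ω → ℕ∞,
      (∀ t : ℕ, t ≤ N → MeasurableSet[F t] {ω | τ ω = (t : ℕ∞)}) →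
      (∀ ω, τ ω ≤ (N : ℕ∞) ∨ τ ω = ⊤) →
      EE.E 0 (putPayoff r k S N τ) ≤ᵐ[μ] EE.E 0 (putPayoff r k S N τk) := by
  intro τ hτ _
  have hK : ∀ t ≤ N, StronglyMeasurable[F N] (K t) :=
    fun t ht => (hK_adapted t ht).mono (F.mono ht)
  have hrep : ∀ t ≤ N, discountedPayoff r k S t =ᵐ[μ] EE.E t (exerciseClaim r k K t N) :=
    fun t ht => EE.discountedPayoff_ae_eq_E_exerciseClaim (by positivity) hK hK_sqInt
      (hK_rep t ht) ht
  have hW : ∀ t ≤ N, ∀ᵐ ω ∂μ, τk ω = t → exerciseClaim r k K t N ω = valueClaim r k K N ω := by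
    intro t htN
    filter_upwards [hbetween, hmin] with ω hω hminω hτω
    rw [hτlowk_def, hτbark_def, hτω] at hω
    rw [hτω, ENat.toNat_natCast] at hminω
    exact exerciseClaim_eq_valueClaim_of_iInf htN hω.1 hω.2 (hminω (Nat.cast_le.2 htN))
  have hV : ∀ᵐ ω ∂μ, (N : ℕ∞) < τk ω → valueClaim r k K N ω = 0 := by
    filter_upwards [hbetween] with ω hω hNτ
    exact valueClaim_eq_zero_of_iInf (hNτ.trans_le (hω.2.trans_eq (hτbark_def ω)))
  exact (EE.E_zero_putPayoff_le_valueClaim hr.le hS_adapted hS_sqInt hK hK_sqInt hrep hτ).trans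
    (EE.E_zero_valueClaim_le_putPayoff hS_adapted hS_sqInt hK hK_sqInt hrep hτk_meas hW hV)

/-- **Optimal exercise of an American put via the universal process `K`.** If an
extended stopping time `τᵏ` satisfies `τ̲ᵏ ≤ τᵏ ≤ τ̄ᵏ` a.s. (where
`τ̲ᵏ = min{ t ≤ N : K_t ≤ k }` and `τ̄ᵏ = min{ t ≤ N : K_t < k }`, `= ∞` if no such
`t`) and, a.s. on `{τᵏ ≤ N}`, `min_{0≤v≤τᵏ} K_v = K_{τᵏ}`, then `τᵏ` is optimal:
for every extended stopping time `τ`, `E 0 [ξ_τ] ≤ E 0 [ξ_{τᵏ}]` a.s. -/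
theorem american_put_optimal_exercise
{Ω : Type*} [TopologicalSpace Ω] [PolishSpace Ω]
    [m0 : MeasurableSpace Ω] [BorelSpace Ω]
    (μ : Measure Ω) [IsProbabilityMeasure μ]
    (F : Filtration ℕ m0) (N : ℕ) (hN : 1 ≤ N)
    (EE : NLExp μ F N)
    (r : ℝ) (hr : 0 < r)
    (S : ℕ → Ω → ℝ)
    (hS_adapted : ∀ t, t ≤ N → StronglyMeasurable[F t] (S t))
    (hS_sqInt : ∀ t, t ≤ N → MemLp (fun ω => ((1 + r) ^ t)⁻¹ * S t ω) 2 μ)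
(K : ℕ → Ω → ℝ)
    (hK_adapted : ∀ t, t ≤ N → StronglyMeasurable[F t] (K t))
    (hK_sqInt : ∀ t, t ≤ N → MemLp (K t) 2 μ)
    (hK_rep : ∀ t, t ≤ N →
      (fun ω => -(((1 + r) ^ t)⁻¹ * S t ω)) =ᵐ[μ] EE.E t fun ω =>
        (∑ u ∈ Finset.Ico t N,
          r / (1 + r) * ((1 + r) ^ u)⁻¹ * runMax (fun v ω' => -K v ω') t u ω)
        + ((1 + r) ^ N)⁻¹ * runMax (fun v ω' => -K v ω') t N ω)
    (k : ℝ) (hk : 0 ≤ k)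
    (τlowk τbark : Ω → ℕ∞)
    (hτlowk_def : ∀ ω, τlowk ω = ⨅ (t : ℕ) (_ : t ≤ N ∧ K t ω ≤ k), (t : ℕ∞))
    (hτbark_def : ∀ ω, τbark ω = ⨅ (t : ℕ) (_ : t ≤ N ∧ K t ω < k), (t : ℕ∞))
    (τk : Ω → ℕ∞)
    (hτk_meas : ∀ t : ℕ, t ≤ N → MeasurableSet[F t] {ω | τk ω = (t : ℕ∞)})
    (hτk_range : ∀ ω, τk ω ≤ (N : ℕ∞) ∨ τk ω = ⊤)
    (hbetween : ∀ᵐ ω ∂μ, τlowk ω ≤ τk ω ∧ τk ω ≤ τbark ω)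
    (hmin : ∀ᵐ ω ∂μ, τk ω ≤ (N : ℕ∞) →
      runMin K 0 (τk ω).toNat ω = K (τk ω).toNat ω) :
    ∀ τ : Ω → ℕ∞,
      (∀ t : ℕ, t ≤ N → MeasurableSet[F t] {ω | τ ω = (t : ℕ∞)}) →
      (∀ ω, τ ω ≤ (N : ℕ∞) ∨ τ ω = ⊤) →
      EE.E 0 (putPayoff r k S N τ) ≤ᵐ[μ] EE.E 0 (putPayoff r k S N τk) :=
  american_put_optimal_exercise_general (m0 := m0) μ F N EE r hr S hS_adapted hS_sqInt K hK_adapted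
    hK_sqInt hK_rep k τlowk τbark hτlowk_def hτbark_def τk hτk_meas hbetween hmin
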